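/- Fix g ≥ 2 and let F ∈ ℚ[[t]] be the formal power series F = ((1+t³)^{2g} − t^{2g+2}(1+t)^{2g})·((1−t²)(1−t⁴))^{−1} − (1/2)·[ t^{2g−2}(1+t)^{2g}·(1−t²)^{−1} + (−1)^{g−1}·t^{2g−2}(1−t)^{2g}·(1+t²)^{−1} ]. Then F is a polynomial in t of degree exactly 6g − 6 (its coefficient of t^n vanishes for all n > 6g−6 and its coefficient of t^{6g−6} is nonzero), every coefficient of F is a nonnegative integer, and the coefficients are palindromic: for all 0 ≤ i ≤ 6g−6, the coefficient of t^i in F equals the coefficient of t^{6g−6−i}. -/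

import Mathlib

open PowerSeries

namespace IPSU2

/-- Coefficients of the correction series `h_g = ½[(1+t)^{2g} − (−1)^g(1−t)^{2g}]`. -/
def hcoef (g j : ℕ) : ℕ := if (j + g) % 2 = 1 then Nat.choose (2*g) j else 0

/-- Coefficient recursion for the intersection Poincaré polynomials. -/
def cf : ℕ → ℕ → ℕ
  | 0, n => if n ≤ 6 ∧ n % 2 = 0 then 1 else 0
  | (k+1), n =>
      cf k n + 2 * (if 3 ≤ n then cf k (n-3) else 0) + (if 6 ≤ n then cf k (n-6) else 0)
        + (if 2*k+2 ≤ n then hcoef (k+2) (n - (2*k+2)) else 0)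
        + (if 2*k+6 ≤ n then hcoef (k+2) (n - (2*k+6)) else 0)

lemma hcoef_eq_zero {g j : ℕ} (h : 2*g < j) : hcoef g j = 0 := by
  unfold hcoef
  rw [Nat.choose_eq_zero_of_lt h]
  simp

lemma hcoef_symm {g j : ℕ} (h : j ≤ 2*g) : hcoef g j = hcoef g (2*g - j) := by
  unfold hcoef
  have h1 : (2*g - j + g) % 2 = (j + g) % 2 := by omega
  rw [h1, Nat.choose_symm h]

lemma cf_zero : ∀ k n, 6*k+6 < n → cf k n = 0 := by
  intro k
  induction k with
  | zero =>
    intro n h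
    simp only [cf]
    rw [if_neg (by omega)]
  | succ k ih =>
    intro n h
    simp only [cf]
    rw [ih n (by omega)]
    rw [show (if 3 ≤ n then cf k (n-3) else 0) = 0 by
      split_ifs with h3
      · exact ih _ (by omega)
      · rfl]
    rw [show (if 6 ≤ n then cf k (n-6) else 0) = 0 by
      split_ifs with h6
      · exact ih _ (by omega)
      · rfl]
    rw [show (if 2*k+2 ≤ n then hcoef (k+2) (n - (2*k+2)) else 0) = 0 by
      split_ifs with h2
      · exact hcoef_eq_zero (by omega)
      · rfl]
    rw [show (if 2*k+6 ≤ n then hcoef (k+2) (n - (2*k+6)) else 0) = 0 by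
      split_ifs with h2
      · exact hcoef_eq_zero (by omega)
      · rfl]

lemma cf_top : ∀ k, cf k (6*k+6) = 1 := by
  intro k
  induction k with
  | zero => decide
  | succ k ih =>
    simp only [cf]
    rw [if_pos (by omega : 3 ≤ 6*(k+1)+6), if_pos (by omega : 6 ≤ 6*(k+1)+6),
        if_pos (by omega : 2*k+2 ≤ 6*(k+1)+6), if_pos (by omega : 2*k+6 ≤ 6*(k+1)+6)]
    rw [show 6*(k+1)+6-3 = 6*k+9 by omega, show 6*(k+1)+6-6 = 6*k+6 by omega,
        show 6*(k+1)+6-(2*k+2) = 4*k+10 by omega, show 6*(k+1)+6-(2*k+6) = 4*k+6 by omega]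
    rw [cf_zero k _ (by omega), cf_zero k _ (by omega), ih,
        hcoef_eq_zero (by omega), hcoef_eq_zero (by omega)]

lemma cf_palin : ∀ k i, i ≤ 6*k+6 → cf k i = cf k (6*k+6 - i) := by
  intro k
  induction k with
  | zero =>
    intro i hi
    have h6 : i ≤ 6 := by omega
    interval_cases i <;> decide
  | succ k ih =>
    have aux1 : ∀ j, j ≤ 6*k+12 →
        cf k j = (if 6 ≤ 6*k+12 - j then cf k (6*k+12-j-6) else 0) := by
      intro j hj
      split_ifs with h6
      · rw [show 6*k+12-j-6 = 6*k+6-j by omega]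
        exact ih j (by omega)
      · exact cf_zero k j (by omega)
    have aux2 : ∀ j, j ≤ 6*k+12 →
        (if 3 ≤ j then cf k (j-3) else 0) = (if 3 ≤ 6*k+12-j then cf k (6*k+12-j-3) else 0) := by
      intro j hj
      split_ifs with h3 h3' h3'
      · rw [show 6*k+12-j-3 = 6*k+9-j by omega]
        rw [ih (j-3) (by omega), show 6*k+6-(j-3) = 6*k+9-j by omega]
      · exact cf_zero k _ (by omega)
      · rw [show 6*k+12-j-3 = 6*k+9-j by omega]
        exact (cf_zero k _ (by omega)).symm
      · rfl
    have aux4 : ∀ j, j ≤ 6*k+12 →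
        (if 2*k+2 ≤ j then hcoef (k+2) (j - (2*k+2)) else 0)
          = (if 2*k+6 ≤ 6*k+12-j then hcoef (k+2) (6*k+12-j - (2*k+6)) else 0) := by
      intro j hj
      split_ifs with h2 h2' h2'
      · rw [hcoef_symm (by omega : j - (2*k+2) ≤ 2*(k+2)),
            show 2*(k+2) - (j - (2*k+2)) = 4*k+6-j by omega,
            show 6*k+12-j - (2*k+6) = 4*k+6-j by omega]
      · exact hcoef_eq_zero (by omega)
      · exact (hcoef_eq_zero (by omega)).symm
      · rfl
    intro i hi
    have hi' : i ≤ 6*k+12 := by omega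
    have hM : 6*(k+1)+6 - i = 6*k+12 - i := by omega
    simp only [cf, hM]
    have e1 := aux1 i hi'
    have e2 := aux2 i hi'
    have e4 := aux4 i hi'
    have e3 := aux1 (6*k+12-i) (by omega)
    rw [show 6*k+12-(6*k+12-i) = i by omega] at e3
    have e5 := aux4 (6*k+12-i) (by omega)
    rw [show 6*k+12-(6*k+12-i) = i by omega] at e5
    rw [e1, e2, e4, e3, ← e5]
    ring

noncomputable section

/-- The correction series as a `ℚ`-power series. -/
def Hq (g : ℕ) : ℚ⟦X⟧ := PowerSeries.mk fun j => (hcoef g j : ℚ)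

/-- The candidate intersection Poincaré polynomial as a power series. -/
def Pk (k : ℕ) : ℚ⟦X⟧ := PowerSeries.mk fun n => (cf k n : ℚ)

lemma coeff_one_add_X_pow (m : ℕ) : ∀ n : ℕ,
    coeff n (((1:ℚ⟦X⟧) + X)^m) = (m.choose n : ℚ) := by
  induction m with
  | zero =>
    intro n
    cases n <;> simp [coeff_one]
  | succ m ih =>
    intro n
    rw [show ((1:ℚ⟦X⟧)+X)^(m+1) = (1+X)^m + (1+X)^m * X^1 by ring,
        map_add, coeff_mul_X_pow', ih]
    split_ifs with h
    · rw [ih]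
      obtain ⟨n', rfl⟩ : ∃ n', n = n'+1 := ⟨n-1, by omega⟩
      rw [Nat.add_sub_cancel, Nat.choose_succ_succ]
      push_cast
      ring
    · have : n = 0 := by omega
      subst this
      simp

lemma coeff_one_sub_X_pow (m : ℕ) : ∀ n : ℕ,
    coeff n (((1:ℚ⟦X⟧) - X)^m) = ((-1:ℚ))^n * (m.choose n : ℚ) := by
  induction m with
  | zero =>
    intro n
    cases n <;> simp [coeff_one]
  | succ m ih =>
    intro n
    rw [show ((1:ℚ⟦X⟧)-X)^(m+1) = (1-X)^m - (1-X)^m * X^1 by ring,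
        map_sub, coeff_mul_X_pow', ih]
    split_ifs with h
    · rw [ih]
      obtain ⟨n', rfl⟩ : ∃ n', n = n'+1 := ⟨n-1, by omega⟩
      rw [Nat.add_sub_cancel, Nat.choose_succ_succ]
      push_cast
      ring
    · have : n = 0 := by omega
      subst this
      simp

lemma neg_one_pow_eq (g : ℕ) : ((-1 : ℚ⟦X⟧))^g = PowerSeries.C ((-1)^g) := by
  rw [map_pow, map_neg, map_one]

lemma Hq_eq (g : ℕ) :
    Hq g = PowerSeries.C (1/2) * ((1+X)^(2*g) - (-1)^g * (1-X)^(2*g)) := by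
  ext n
  rw [Hq, coeff_mk, coeff_C_mul, map_sub, coeff_one_add_X_pow, neg_one_pow_eq,
      coeff_C_mul, coeff_one_sub_X_pow]
  simp only [hcoef]
  rcases Nat.even_or_odd (n + g) with he | ho
  · rw [if_neg (by rw [Nat.even_iff] at he; omega)]
    have h1 : ((-1:ℚ))^g * (-1)^n = 1 := by
      rw [← pow_add]
      exact Even.neg_one_pow (by rwa [add_comm] at he)
    push_cast
    linear_combination (((2*g).choose n : ℚ)/2) * h1
  · rw [if_pos (by rw [Nat.odd_iff] at ho; omega)]
    have h1 : ((-1:ℚ))^g * (-1)^n = -1 := by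
      rw [← pow_add]
      exact Odd.neg_one_pow (by rwa [add_comm] at ho)
    linear_combination (((2*g).choose n : ℚ)/2) * h1

lemma Pk_succ (k : ℕ) :
    Pk (k+1) = Pk k + (Pk k * X^3 + Pk k * X^3) + Pk k * X^6
      + Hq (k+2) * X^(2*k+2) + Hq (k+2) * X^(2*k+6) := by
  ext n
  simp only [Pk, Hq, map_add, coeff_mk, coeff_mul_X_pow']
  simp only [cf]
  push_cast [apply_ite (fun x : ℕ => (x:ℚ))]
  ring

lemma Pk_bridge (k : ℕ) :
    Pk (k+1) = (1+X^3)^2 * Pk k + X^(2*k+2) * (1+X^4) * Hq (k+2) := by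
  rw [Pk_succ]
  ring

/-- The genus-`(k+2)` intersection Poincaré series. -/
def Sg (k : ℕ) : ℚ⟦X⟧ :=
  (((1 : ℚ⟦X⟧) + X ^ 3) ^ (2 * (k+2)) - X ^ (2 * (k+2) + 2) * (1 + X) ^ (2 * (k+2))) *
      ((1 - X ^ 2) * (1 - X ^ 4))⁻¹ -
    PowerSeries.C (1 / 2) *
      ((X : ℚ⟦X⟧) ^ (2 * (k+2) - 2) * (1 + X) ^ (2 * (k+2)) * (1 - X ^ 2)⁻¹ +
        (-1) ^ ((k+2) - 1) * X ^ (2 * (k+2) - 2) * (1 - X) ^ (2 * (k+2)) * (1 + X ^ 2)⁻¹)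

/-- The unit we multiply by to clear all denominators. -/
def Munit : ℚ⟦X⟧ := ((1 - X^2) * (1 - X^4)) * (1 - X^2) * (1 + X^2) * 2

lemma cD : (((1:ℚ⟦X⟧) - X^2) * (1 - X^4)) * (((1:ℚ⟦X⟧) - X^2) * (1 - X^4))⁻¹ = 1 :=
  PowerSeries.mul_inv_cancel _ (by simp)

lemma c1 : ((1:ℚ⟦X⟧) - X^2) * ((1:ℚ⟦X⟧) - X^2)⁻¹ = 1 :=
  PowerSeries.mul_inv_cancel _ (by simp)

lemma c3 : ((1:ℚ⟦X⟧) + X^2) * ((1:ℚ⟦X⟧) + X^2)⁻¹ = 1 :=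
  PowerSeries.mul_inv_cancel _ (by simp)

lemma c2' : (2:ℚ⟦X⟧) * PowerSeries.C (1/2) = 1 := by
  rw [show (2:ℚ⟦X⟧) = PowerSeries.C 2 from (map_ofNat _ 2).symm, ← map_mul]
  norm_num

lemma hM : Munit ≠ 0 := by
  intro h
  have h2 := congrArg constantCoeff h
  simp [Munit] at h2
  rw [show constantCoeff (2:ℚ⟦X⟧) = 2 from map_ofNat _ 2] at h2
  norm_num at h2

lemma Sg_mul (k : ℕ) : Sg k * Munit =
    2 * ((1-X^2)*(1+X^2)) * ((1+X^3)^(2*(k+2)) - X^(2*(k+2)+2) * (1+X)^(2*(k+2)))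
    - ((1-X^2)*(1-X^4)) * (1+X^2) * (X^(2*k+2) * (1+X)^(2*(k+2)))
    - ((1-X^2)*(1-X^4)) * (1-X^2) * ((-1)^(k+1) * X^(2*k+2) * (1-X)^(2*(k+2))) := by
  unfold Sg Munit
  rw [show 2*(k+2)-2 = 2*k+2 by omega, show (k+2)-1 = k+1 by omega]
  trans ((2 * ((1-X^2)*(1+X^2)) * ((1+X^3)^(2*(k+2)) - X^(2*(k+2)+2) * (1+X)^(2*(k+2))))
          * ((((1:ℚ⟦X⟧)-X^2)*(1-X^4)) * (((1:ℚ⟦X⟧)-X^2)*(1-X^4))⁻¹)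
        - ((((1-X^2)*(1-X^4)) * (1+X^2) * (X^(2*k+2) * (1+X)^(2*(k+2))))
            * (((2:ℚ⟦X⟧) * PowerSeries.C (1/2)) * (((1:ℚ⟦X⟧)-X^2) * ((1:ℚ⟦X⟧)-X^2)⁻¹))
          + (((1-X^2)*(1-X^4)) * (1-X^2) * ((-1)^(k+1) * X^(2*k+2) * (1-X)^(2*(k+2))))
            * (((2:ℚ⟦X⟧) * PowerSeries.C (1/2)) * (((1:ℚ⟦X⟧)+X^2) * ((1:ℚ⟦X⟧)+X^2)⁻¹))))
  · ring
  · rw [cD, c1, c3, c2']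
    ring

lemma Sg_zero : Sg 0 = 1 + X^2 + X^4 + X^6 := by
  apply mul_right_cancel₀ hM
  rw [Sg_mul 0]
  unfold Munit
  ring

lemma Sg_succ (k : ℕ) :
    Sg (k+1) = (1+X^3)^2 * Sg k + X^(2*k+2) * (1+X^4) * Hq (k+2) := by
  rw [Hq_eq]
  apply mul_right_cancel₀ hM
  rw [Sg_mul (k+1)]
  rw [show ((1+X^3)^2 * Sg k + X^(2*k+2) * (1+X^4) *
        (PowerSeries.C (1/2) * ((1+X)^(2*(k+2)) - (-1)^(k+2) * (1-X)^(2*(k+2))))) * Munit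
      = (1+X^3)^2 * (Sg k * Munit)
        + (X^(2*k+2) * (1+X^4) * ((1+X)^(2*(k+2)) - (-1)^(k+2) * (1-X)^(2*(k+2)))
            * (((1-X^2)*(1-X^4)) * ((1-X^2) * (1+X^2))))
          * ((2:ℚ⟦X⟧) * PowerSeries.C (1/2)) by unfold Munit; ring]
  rw [Sg_mul k, c2', mul_one]
  ring

lemma Sg_eq_Pk : ∀ k, Sg k = Pk k := by
  intro k
  induction k with
  | zero =>
    rw [Sg_zero]
    ext n
    simp only [Pk, coeff_mk, map_add, coeff_one, coeff_X_pow]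
    by_cases h7 : 7 ≤ n
    · rw [cf_zero 0 n (by omega)]
      rw [if_neg (by omega), if_neg (by omega), if_neg (by omega), if_neg (by omega)]
      norm_num
    · have h6 : n ≤ 6 := by omega
      interval_cases n <;> norm_num [cf]
  | succ k ih =>
    rw [Sg_succ k, ih, ← Pk_bridge k]

end

end IPSU2

/-- The intersection Poincaré series of `X(SU(2))` for a genus-`g` surface group:
`F = ((1+t³)^{2g} − t^{2g+2}(1+t)^{2g})((1−t²)(1−t⁴))⁻¹
   − (1/2)[t^{2g−2}(1+t)^{2g}(1−t²)⁻¹ + (−1)^{g−1} t^{2g−2}(1−t)^{2g}(1+t²)⁻¹] ∈ ℚ[[t]]`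
is a polynomial of degree exactly `6g−6`, has nonnegative integer coefficients, and its
coefficients are palindromic: `coeff i F = coeff (6g−6−i) F` for `0 ≤ i ≤ 6g−6`. -/
theorem intersection_poincare_series_SU2 (g : ℕ) (hg : 2 ≤ g) :
    ∀ F : ℚ⟦X⟧,
      F = (((1 : ℚ⟦X⟧) + X ^ 3) ^ (2 * g) - X ^ (2 * g + 2) * (1 + X) ^ (2 * g)) *
            ((1 - X ^ 2) * (1 - X ^ 4))⁻¹ -
          PowerSeries.C (1 / 2) *
            ((X : ℚ⟦X⟧) ^ (2 * g - 2) * (1 + X) ^ (2 * g) * (1 - X ^ 2)⁻¹ +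
              (-1) ^ (g - 1) * X ^ (2 * g - 2) * (1 - X) ^ (2 * g) * (1 + X ^ 2)⁻¹) →
      (∀ n : ℕ, 6 * g - 6 < n → PowerSeries.coeff n F = 0) ∧
      PowerSeries.coeff (6 * g - 6) F ≠ 0 ∧
      (∀ n : ℕ, ∃ k : ℕ, PowerSeries.coeff n F = (k : ℚ)) ∧
      (∀ i : ℕ, i ≤ 6 * g - 6 →
        PowerSeries.coeff i F = PowerSeries.coeff (6 * g - 6 - i) F) := by
  obtain ⟨k, rfl⟩ : ∃ k, g = k + 2 := ⟨g - 2, by omega⟩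
  intro F hF
  have hSF : F = IPSU2.Sg k := hF
  rw [hSF, IPSU2.Sg_eq_Pk]
  have hc : ∀ n, PowerSeries.coeff n (IPSU2.Pk k) = (IPSU2.cf k n : ℚ) :=
    fun n => PowerSeries.coeff_mk n _
  have h66 : 6 * (k+2) - 6 = 6*k + 6 := by omega
  rw [h66]
  refine ⟨?_, ?_, ?_, ?_⟩
  · intro n hn
    rw [hc]
    exact_mod_cast congrArg (Nat.cast : ℕ → ℚ) (IPSU2.cf_zero k n hn)
  · rw [hc, IPSU2.cf_top]
    norm_num
  · intro n
    exact ⟨IPSU2.cf k n, hc n⟩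
  · intro i hi
    rw [hc, hc]
    exact_mod_cast congrArg (Nat.cast : ℕ → ℚ) (IPSU2.cf_palin k i hi)
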